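/- Let n ≥ 2 be an integer that is not divisible by 3, and let φ be any graph automorphism of VQ_{n-1}. Then the map σ₀ on the vertex set of VQ_n defined by σ₀(x_n X_{n-1}) = x_n φ(X_{n-1}), where X_{n-1} = x_{n-1}...x_1, is a graph automorphism of VQ_n. -/

import Mathlib

/-! When `3 ∤ m + 1`, two vertices of `VQ_{m+1}` are adjacent iff either they share the leading
bit and their tails are adjacent in `VQ_m`, or they differ in the leading bit and have equal
tails. This description is invariant under applying an automorphism of `VQ_m` to the tails. -/

/-- Adjacency relation of the `n`-dimensional varietal hypercube `VQ_n`.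
A vertex is a binary string `x_n x_{n-1} ... x_1`, encoded as a function
`X : Fin n → Bool` where `X ⟨k-1, _⟩` is the bit `x_k` (so index `n-1` is the
leading bit `x_n`). -/
def vqAdj : (n : ℕ) → (Fin n → Bool) → (Fin n → Bool) → Prop
  | 0, _, _ => False
  | 1, X, Y => X ≠ Y
  | (n + 2), X, Y =>
    if X (Fin.last (n + 1)) = Y (Fin.last (n + 1)) then
      -- both in the same copy of `VQ_{n+1}`
      vqAdj (n + 1) (Fin.init X) (Fin.init Y)
    else if (n + 2) % 3 = 0 then
      -- transversal edge, `n + 2` divisible by 3: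
      -- `x_{n-3} ... x_1 = y_{n-3} ... y_1` and
      -- `(x_{n-1}x_{n-2}, y_{n-1}y_{n-2}) ∈ {(00,00),(01,01),(10,11),(11,10)}`
      (∀ i : Fin (n + 2), (i : ℕ) < n - 1 → X i = Y i) ∧
      Y ⟨n, by omega⟩ = X ⟨n, by omega⟩ ∧
      Y ⟨n - 1, by omega⟩ = xor (X ⟨n, by omega⟩) (X ⟨n - 1, by omega⟩)
    else
      -- transversal edge, `n + 2` not divisible by 3:
      -- `x_{n-1} ... x_1 = y_{n-1} ... y_1`
      Fin.init X = Fin.init Y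

/-- The `n`-dimensional varietal hypercube. -/
def VQ (n : ℕ) : SimpleGraph (Fin n → Bool) := SimpleGraph.fromRel (vqAdj n)

/-- Apply `f` to the lowest `k` bits of a string of `m` bits, keeping the top
`m - k` bits unchanged. -/
def applyLow {m k : ℕ} (h : k ≤ m) (f : (Fin k → Bool) → (Fin k → Bool))
    (X : Fin m → Bool) : Fin m → Bool :=
  fun i => if h' : (i : ℕ) < k then f (fun j => X (Fin.castLE h j)) ⟨i, h'⟩ else X i

/-- Complement the bit at (0-based) index `t`, keeping all other bits unchanged. -/
def flipAt {m : ℕ} (t : ℕ) (X : Fin m → Bool) : Fin m → Bool :=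
  fun i => if (i : ℕ) = t then !(X i) else X i

lemma vqAdj_add_two_iff {k : ℕ} (h3 : (k + 2) % 3 ≠ 0) {X Y : Fin (k + 2) → Bool} :
    vqAdj (k + 2) X Y ↔
      X (Fin.last (k + 1)) = Y (Fin.last (k + 1)) ∧ vqAdj (k + 1) (Fin.init X) (Fin.init Y) ∨
      X (Fin.last (k + 1)) ≠ Y (Fin.last (k + 1)) ∧ Fin.init X = Fin.init Y := by
  rw [vqAdj.eq_3]
  split_ifs <;> simp_all

lemma Fin.eq_iff_init_eq_and_last_eq {m : ℕ} {α : Type*} {X Y : Fin (m + 1) → α} :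
    X = Y ↔ Fin.init X = Fin.init Y ∧ X (Fin.last m) = Y (Fin.last m) := by
  conv_lhs => rw [← Fin.snoc_init_self X, ← Fin.snoc_init_self Y]
  exact Fin.snoc_inj

lemma VQ_adj_succ_iff {m : ℕ} (h3 : (m + 1) % 3 ≠ 0) {X Y : Fin (m + 1) → Bool} :
    (VQ (m + 1)).Adj X Y ↔
      X (Fin.last m) = Y (Fin.last m) ∧ (VQ m).Adj (Fin.init X) (Fin.init Y) ∨
      X (Fin.last m) ≠ Y (Fin.last m) ∧ Fin.init X = Fin.init Y := by
  cases m with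
  | zero =>
    simp [VQ, vqAdj, funext_iff, Fin.forall_fin_one, eq_comm]
  | succ k =>
    simp only [VQ, SimpleGraph.fromRel_adj, vqAdj_add_two_iff h3]
    rw [ne_eq, ne_eq, Fin.eq_iff_init_eq_and_last_eq]
    grind

lemma applyLow_eq_snoc {m : ℕ} (h : m ≤ m + 1) (f : (Fin m → Bool) → Fin m → Bool)
    (X : Fin (m + 1) → Bool) :
    applyLow h f X = Fin.snoc (f (Fin.init X)) (X (Fin.last m)) := by
  funext i
  induction i using Fin.lastCases with
  | last => simp [applyLow]
  | cast j => simp [applyLow]; rfl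

/-- The map `σ₀ : x_{m+1} X ↦ x_{m+1} φ(X)` of the paper. -/
def VQ.mapTail {m : ℕ} (h3 : (m + 1) % 3 ≠ 0) (φ : VQ m ≃g VQ m) : VQ (m + 1) ≃g VQ (m + 1) where
  toFun X := Fin.snoc (φ (Fin.init X)) (X (Fin.last m))
  invFun X := Fin.snoc (φ.symm (Fin.init X)) (X (Fin.last m))
  left_inv X := by simp
  right_inv X := by simp
  map_rel_iff' := by
    simp [VQ_adj_succ_iff h3, φ.map_adj_iff]

/-- **Lemma 2.4, case `n` not divisible by 3.** For `n ≥ 2` with `3 ∤ n` and any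
automorphism `φ` of `VQ_{n-1}`, the map `σ₀ : x_n X_{n-1} ↦ x_n φ(X_{n-1})`
(keep the leading bit, apply `φ` to the lower `n - 1` bits) is a graph
automorphism of `VQ_n`. -/
theorem VQ_sigma0_isAutomorphism_of_not_dvd (n : ℕ) (h3 : n % 3 ≠ 0)
    (φ : VQ (n - 1) ≃g VQ (n - 1)) :
    ∃ σ : VQ n ≃g VQ n, ∀ X : Fin n → Bool,
      σ X = applyLow (by omega : n - 1 ≤ n) (⇑φ) X := by
  obtain ⟨m, rfl⟩ : ∃ m, n = m + 1 := ⟨n - 1, by omega⟩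
  exact ⟨VQ.mapTail h3 φ, fun X => (applyLow_eq_snoc _ _ X).symm⟩
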